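/- For every real number a > 0, it holds that 0 < (1+a)·(φ₁(a) - φ₂(a)) < 1, where φ₁(a) = (1-e^{-a})/a and φ₂(a) = (e^{-a}-1+a)/a². -/

import Mathlib

/-!
Writing `x = exp (-a)`, one has `φ₁ a - φ₂ a = (1 - (1 + a) x) / a²`. The lower bound is then
`1 + a < exp a`, and the upper bound is `1 + a - a² < (1 + a)² x`. This is trivial when
`1 + a - a² ≤ 0`; otherwise `a < 2`, and it follows from the Padé bound `exp a < (2 + a) / (2 - a)`
because `(1 + a)² (2 - a) = (1 + a - a²) (2 + a) + a²`.
-/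

open Real

lemma phi1_sub_phi2_eq {a : ℝ} (ha : a ≠ 0) :
    (1 - exp (-a)) / a - (exp (-a) - 1 + a) / a ^ 2 = (1 - (1 + a) * exp (-a)) / a ^ 2 := by
  field_simp
  ring

lemma one_add_mul_exp_neg_lt_one {a : ℝ} (ha : a ≠ 0) : (1 + a) * exp (-a) < 1 := by
  rw [exp_neg, ← div_eq_mul_inv, div_lt_one (exp_pos a), add_comm]
  exact add_one_lt_exp ha

lemma one_add_sub_sq_lt_sq_mul_exp_neg {a : ℝ} (ha : 0 < a) :
    1 + a - a ^ 2 < (1 + a) ^ 2 * exp (-a) := by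
  rw [exp_neg, ← div_eq_mul_inv, lt_div_iff₀ (exp_pos a)]
  rcases le_or_gt (1 + a - a ^ 2) 0 with hneg | hpos
  · exact (mul_nonpos_of_nonpos_of_nonneg hneg (exp_pos a).le).trans_lt (by positivity)
  have ha2 : a < 2 := by nlinarith
  calc (1 + a - a ^ 2) * exp a
      < (1 + a - a ^ 2) * ((2 + a) / (2 - a)) :=
        mul_lt_mul_of_pos_left (exp_lt_two_add_div_two_sub ha ha2) hpos
    _ ≤ (1 + a) ^ 2 := by
        rw [← mul_div_assoc, div_le_iff₀ (by linarith)]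
        linear_combination sq_nonneg a

theorem etd_phi1_sub_phi2_bound (a : ℝ) (ha : 0 < a) :
    0 < (1 + a) * ((1 - Real.exp (-a)) / a - (Real.exp (-a) - 1 + a) / a ^ 2) ∧
      (1 + a) * ((1 - Real.exp (-a)) / a - (Real.exp (-a) - 1 + a) / a ^ 2) < 1 := by
  rw [phi1_sub_phi2_eq ha.ne']
  have hlow : 0 < 1 - (1 + a) * exp (-a) := sub_pos.2 (one_add_mul_exp_neg_lt_one ha.ne')
  refine ⟨by positivity, ?_⟩
  have hup : (1 + a) * (1 - (1 + a) * exp (-a)) < a ^ 2 := by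
    linear_combination one_add_sub_sq_lt_sq_mul_exp_neg ha
  rwa [← mul_div_assoc, div_lt_one (by positivity)]
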